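/- The naive top trading cycle dynamics on roommate assignments need not terminate: there is a 4-agent, 2-room instance with strict utilities and agents indifferent over rooms in which the sequence of assignments obtained by repeatedly resolving a top trading cycle returns to the initial assignment after 4 steps. -/

import Mathlib

/-!
Agents are indifferent between the two rooms, so `i` points to `j` exactly when it prefers
`j`'s roommate both to its own roommate and to `j`. The happiness matrix is cyclic: every agent
ranks its cyclic predecessor first, the opposite agent second and its successor last. Hence in
each of the four assignments the two agents not paired with their predecessor point at each
other, and resolving that 2-cycle pairs them with their predecessors while separating the
other two, whose turn comes next.
-/

/-- A roommate assignment: each agent has a roommate (`mate`) and a room (`room`);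
roommates share a room and each room hosts exactly one pair. -/
structure Assignment (A R : Type*) where
  mate : A → A
  room : A → R
  mate_ne_self : ∀ i, mate i ≠ i
  mate_invol : ∀ i, mate (mate i) = i
  room_mate : ∀ i, room (mate i) = room i
  room_eq_iff : ∀ i j, room i = room j ↔ (j = i ∨ j = mate i)

variable {A R : Type*}

/-- Utility of agent `i` in assignment `μ`: happiness for the roommate plus value of the room. -/
def util (h : A → A → ℝ) (v : A → R → ℝ) (μ : Assignment A R) (i : A) : ℝ :=
  h i (μ.mate i) + v i (μ.room i)

/-- `(i,j)` is a 2-person-stable blocking pair: they live in different rooms and both would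
strictly gain by swapping places. -/
def blocking2PS (h : A → A → ℝ) (v : A → R → ℝ) (μ : Assignment A R) (i j : A) : Prop :=
  μ.room i ≠ μ.room j ∧
  h i (μ.mate j) + v i (μ.room j) > h i (μ.mate i) + v i (μ.room i) ∧
  h j (μ.mate i) + v j (μ.room i) > h j (μ.mate j) + v j (μ.room j)

/-- `(i,j)` is a 4-person-stable blocking pair: in addition, both displaced roommates
strictly prefer their new roommate. -/
def blocking4PS (h : A → A → ℝ) (v : A → R → ℝ) (μ : Assignment A R) (i j : A) : Prop :=
  blocking2PS h v μ i j ∧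
  h (μ.mate i) j > h (μ.mate i) i ∧
  h (μ.mate j) i > h (μ.mate j) j

def is2PS (h : A → A → ℝ) (v : A → R → ℝ) (μ : Assignment A R) : Prop :=
  ∀ i j, ¬ blocking2PS h v μ i j

def is4PS (h : A → A → ℝ) (v : A → R → ℝ) (μ : Assignment A R) : Prop :=
  ∀ i j, ¬ blocking4PS h v μ i j

/-- `μ'` Pareto dominates `μ`. -/
def ParetoDom (h : A → A → ℝ) (v : A → R → ℝ) (μ' μ : Assignment A R) : Prop :=
  (∀ i, util h v μ i ≤ util h v μ' i) ∧ ∃ i, util h v μ i < util h v μ' i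

def ParetoOpt (h : A → A → ℝ) (v : A → R → ℝ) (μ : Assignment A R) : Prop :=
  ∀ μ', ¬ ParetoDom h v μ' μ

/-- `μ'` is the result of swapping agents `i` and `j` in `μ`. -/
def IsSwap (μ μ' : Assignment A R) (i j : A) : Prop :=
  μ'.mate i = μ.mate j ∧ μ'.room i = μ.room j ∧
  μ'.mate j = μ.mate i ∧ μ'.room j = μ.room i ∧
  μ'.room (μ.mate i) = μ.room i ∧ μ'.room (μ.mate j) = μ.room j ∧
  ∀ k, k ≠ i → k ≠ j → k ≠ μ.mate i → k ≠ μ.mate j →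
    μ'.mate k = μ.mate k ∧ μ'.room k = μ.room k

/-- Social welfare: the sum of all agents' utilities. -/
noncomputable def SW [Fintype A] (h : A → A → ℝ) (v : A → R → ℝ) (μ : Assignment A R) : ℝ :=
  ∑ i, util h v μ i

/-- Utility agent `i` would get by swapping places with agent `s`. -/
def swapUtil (h : A → A → ℝ) (v : A → R → ℝ) (μ : Assignment A R) (i s : A) : ℝ :=
  h i (μ.mate s) + v i (μ.room s)

/-- Arc of the naive top trading cycle graph: `i` points to `j` when swapping with `j`
strictly improves `i` and maximizes `i`'s utility among all swaps. -/
def naiveArc (h : A → A → ℝ) (v : A → R → ℝ) (μ : Assignment A R) (i j : A) : Prop :=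
  j ≠ i ∧ j ≠ μ.mate i ∧
  swapUtil h v μ i j > util h v μ i ∧
  ∀ s, s ≠ i → s ≠ μ.mate i → swapUtil h v μ i s ≤ swapUtil h v μ i j

/-- Happiness values (agents a1..a4 = 0..3). -/
def hEx9 : Fin 4 → Fin 4 → ℝ := ![![0,3,6,10], ![10,0,3,6], ![6,10,0,3], ![3,6,10,0]]

/-- All room values are 1. -/
def vEx9 : Fin 4 → Fin 2 → ℝ := fun _ _ => 1

/-- μ0 = {(a1,a2,r1),(a3,a4,r2)}. -/
def μ9₀ : Assignment (Fin 4) (Fin 2) :=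
  ⟨![1,0,3,2], ![0,0,1,1], by decide, by decide, by decide, by decide⟩

/-- μ1 = {(a3,a2,r1),(a1,a4,r2)}. -/
def μ9₁ : Assignment (Fin 4) (Fin 2) :=
  ⟨![3,2,1,0], ![1,0,0,1], by decide, by decide, by decide, by decide⟩

/-- μ2 = {(a3,a4,r1),(a1,a2,r2)}. -/
def μ9₂ : Assignment (Fin 4) (Fin 2) :=
  ⟨![1,0,3,2], ![1,1,0,0], by decide, by decide, by decide, by decide⟩

/-- μ3 = {(a1,a4,r1),(a2,a3,r2)}. -/
def μ9₃ : Assignment (Fin 4) (Fin 2) :=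
  ⟨![3,2,1,0], ![0,1,1,0], by decide, by decide, by decide, by decide⟩

namespace Assignment

variable (μ : Assignment A R)

theorem room_ne_iff {i j : A} : μ.room i ≠ μ.room j ↔ j ≠ i ∧ j ≠ μ.mate i := by
  rw [Ne, μ.room_eq_iff]
  tauto

theorem eq_or_eq_mate_of_room_ne [Fintype R] (hR : Fintype.card R ≤ 2) {i j s : A}
    (hj : μ.room i ≠ μ.room j) (hs : μ.room i ≠ μ.room s) : s = j ∨ s = μ.mate j := by
  classical
  rw [← μ.room_eq_iff]
  by_contra hjs
  have hcard : ({μ.room i, μ.room j, μ.room s} : Finset R).card = 3 :=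
    Finset.card_eq_three.mpr ⟨_, _, _, hj, hs, hjs, rfl⟩
  have := hcard ▸ Finset.card_le_univ ({μ.room i, μ.room j, μ.room s} : Finset R)
  omega

end Assignment

section RoomIndifferent

variable {h : A → A → ℝ} {v : A → R → ℝ} {μ : Assignment A R} {i : A}

theorem swapUtil_le_swapUtil_iff (hv : ∀ r r', v i r = v i r') {s j : A} :
    swapUtil h v μ i s ≤ swapUtil h v μ i j ↔ h i (μ.mate s) ≤ h i (μ.mate j) := by
  simp only [swapUtil, hv (μ.room s) (μ.room j), add_le_add_iff_right]

theorem util_lt_swapUtil_iff (hv : ∀ r r', v i r = v i r') {j : A} :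
    util h v μ i < swapUtil h v μ i j ↔ h i (μ.mate i) < h i (μ.mate j) := by
  simp only [util, swapUtil, hv (μ.room i) (μ.room j), add_lt_add_iff_right]

/-- With two rooms, `i`'s only swap partners are `j` and `j`'s roommate, and swapping with the
latter makes `j` the roommate of `i`. -/
theorem naiveArc_iff_of_card_le_two [Fintype R] (hR : Fintype.card R ≤ 2)
    (hv : ∀ r r', v i r = v i r') {j : A} :
    naiveArc h v μ i j ↔
      μ.room i ≠ μ.room j ∧ h i (μ.mate i) < h i (μ.mate j) ∧ h i j ≤ h i (μ.mate j) := by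
  simp only [naiveArc, gt_iff_lt, ← μ.room_ne_iff, util_lt_swapUtil_iff hv,
    swapUtil_le_swapUtil_iff hv, ← and_assoc, and_congr_right_iff]
  rintro ⟨hj, -⟩
  constructor
  · intro hmax
    obtain ⟨hji, hjm⟩ := μ.room_ne_iff.mp (μ.room_mate j ▸ hj : μ.room i ≠ μ.room (μ.mate j))
    simpa only [μ.mate_invol] using hmax (μ.mate j) hji hjm
  · intro hle s hsi hsm
    rcases μ.eq_or_eq_mate_of_room_ne hR hj (μ.room_ne_iff.mpr ⟨hsi, hsm⟩) with rfl | rfl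
    · exact le_rfl
    · rwa [μ.mate_invol]

end RoomIndifferent

/-- Naive TTC need not terminate: starting from μ0, resolving the two-cycles
(a1,a3), (a2,a4), (a1,a3), (a2,a4) — each a genuine top trading cycle of the current
assignment — returns to the initial assignment after 4 steps. -/
theorem naive_ttc_cycles :
    (naiveArc hEx9 vEx9 μ9₀ 0 2 ∧ naiveArc hEx9 vEx9 μ9₀ 2 0 ∧ IsSwap μ9₀ μ9₁ 0 2) ∧
    (naiveArc hEx9 vEx9 μ9₁ 1 3 ∧ naiveArc hEx9 vEx9 μ9₁ 3 1 ∧ IsSwap μ9₁ μ9₂ 1 3) ∧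
    (naiveArc hEx9 vEx9 μ9₂ 0 2 ∧ naiveArc hEx9 vEx9 μ9₂ 2 0 ∧ IsSwap μ9₂ μ9₃ 0 2) ∧
    (naiveArc hEx9 vEx9 μ9₃ 1 3 ∧ naiveArc hEx9 vEx9 μ9₃ 3 1 ∧ IsSwap μ9₃ μ9₀ 1 3) := by
  have hR : Fintype.card (Fin 2) ≤ 2 := (Fintype.card_fin 2).le
  simp only [naiveArc_iff_of_card_le_two (v := vEx9) hR (fun _ _ => rfl), IsSwap]
  refine ⟨⟨?_, ?_, by decide⟩, ⟨?_, ?_, by decide⟩, ⟨?_, ?_, by decide⟩, ⟨?_, ?_, by decide⟩⟩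
  all_goals
    simp only [μ9₀, μ9₁, μ9₂, μ9₃, hEx9, Fin.isValue, Matrix.cons_val, Matrix.cons_val',
      Matrix.cons_val_zero, Matrix.cons_val_one, Matrix.cons_val_fin_one, ne_eq, zero_ne_one,
      one_ne_zero, not_false_eq_true, true_and]
    norm_num
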